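/- Let ω = (3, 3/2) and T̂_2(y) := y·(−(1 − 3y)^{-1} + 2(1 − (3/2)y)^{-1}). For any real λ < 0 and real μ > 1, define k* := (−8 + μ − √(28 + 20μ + μ²)) / (9λ(−1 + μ)). Then k* > 0 and μ = −1 − 2/T̂_2(k*λ); that is, μ lies exactly on the right real boundary point of the stability diagram D_{k*λ,2} of the 2-stage order-2 TASE-RK method. -/

import Mathlib

/-- `T̂₂(y) := y T₂(y)` for the order-2 TASE operator with parameters `ω = (3, 3/2)`. -/
noncomputable def That2 (y : ℝ) : ℝ := y * (-(1 - 3 * y)⁻¹ + 2 * (1 - (3 / 2) * y)⁻¹)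

/-!
Writing `y = k λ`, the boundary condition `μ = -1 - 2 / T̂₂(y)` is, after clearing denominators
in `T̂₂(y) = y (2 - 9y) / ((1 - 3y)(2 - 3y))`, the quadratic `9(μ - 1) y² - 2(μ - 8) y - 4 = 0`.
Its discriminant is `4(μ² + 20μ + 28)`, so `k* λ` is its smaller root, which is negative for
`μ > 1`; dividing by `λ < 0` makes `k*` positive.
-/

theorem That2_eq_div {y : ℝ} (h₁ : 1 - 3 * y ≠ 0) (h₂ : 2 - 3 * y ≠ 0) :
    That2 y = y * (2 - 9 * y) / ((1 - 3 * y) * (2 - 3 * y)) := by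
  have h₂' : 1 - 3 / 2 * y = (2 - 3 * y) / 2 := by ring
  rw [That2, h₂', inv_div, inv_eq_one_div, ← neg_div, ← mul_div_assoc, div_add_div _ _ h₁ h₂]
  ring

theorem eq_boundary_of_quadratic {y μ : ℝ} (hy : y < 0)
    (hq : 9 * (μ - 1) * y ^ 2 - 2 * (μ - 8) * y - 4 = 0) :
    μ = -1 - 2 / That2 y := by
  have h₁ : 1 - 3 * y ≠ 0 := by linarith
  have h₂ : 2 - 3 * y ≠ 0 := by linarith
  have hT : y * (2 - 9 * y) ≠ 0 := mul_ne_zero hy.ne (by linarith)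
  rw [That2_eq_div h₁ h₂, div_div_eq_mul_div, eq_sub_iff_add_eq, add_div' _ _ _ hT, div_eq_iff hT]
  linear_combination (-1 : ℝ) * hq

/-- The value of `k* λ`. -/
noncomputable def boundaryRoot (μ : ℝ) : ℝ :=
  (-8 + μ - Real.sqrt (28 + 20 * μ + μ ^ 2)) / (9 * (-1 + μ))

theorem boundaryRoot_isRoot {μ : ℝ} (hμ : μ ≠ 1) (hd : 0 ≤ 28 + 20 * μ + μ ^ 2) :
    9 * (μ - 1) * boundaryRoot μ ^ 2 - 2 * (μ - 8) * boundaryRoot μ - 4 = 0 := by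
  have hs := Real.sq_sqrt hd
  have hμ' : -1 + μ ≠ 0 := fun h => hμ (by linarith)
  rw [boundaryRoot]
  generalize Real.sqrt (28 + 20 * μ + μ ^ 2) = s at hs ⊢
  field_simp
  linear_combination (μ - 1) * hs

theorem boundaryRoot_numerator_neg {μ : ℝ} (hμ : 1 < μ) :
    -8 + μ - Real.sqrt (28 + 20 * μ + μ ^ 2) < 0 := by
  have hlt : (-8 + μ) ^ 2 < 28 + 20 * μ + μ ^ 2 := by nlinarith
  linarith [Real.lt_sqrt_of_sq_lt hlt]

theorem boundaryRoot_neg {μ : ℝ} (hμ : 1 < μ) : boundaryRoot μ < 0 :=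
  div_neg_of_neg_of_pos (boundaryRoot_numerator_neg hμ) (by linarith)

/-- For `λ < 0` and `μ > 1`, the step
`k* := (−8 + μ − √(28 + 20μ + μ²)) / (9λ(−1 + μ))` is positive and `μ = −1 − 2/T̂₂(k*λ)`,
i.e. `μ` is exactly the right real boundary point of the stability diagram `D_{k*λ,2}`. -/
theorem kstar_pos_and_boundary (lam : ℝ) (hlam : lam < 0) (μ : ℝ) (hμ : 1 < μ) :
    0 < (-8 + μ - Real.sqrt (28 + 20 * μ + μ ^ 2)) / (9 * lam * (-1 + μ)) ∧
    μ = -1 - 2 / That2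
        (((-8 + μ - Real.sqrt (28 + 20 * μ + μ ^ 2)) / (9 * lam * (-1 + μ))) * lam) := by
  have hden : 9 * lam * (-1 + μ) < 0 := by nlinarith
  have hk_mul : (-8 + μ - Real.sqrt (28 + 20 * μ + μ ^ 2)) / (9 * lam * (-1 + μ)) * lam
      = boundaryRoot μ := by
    rw [boundaryRoot]
    field_simp [hlam.ne]
  refine ⟨div_pos_of_neg_of_neg (boundaryRoot_numerator_neg hμ) hden, ?_⟩
  rw [hk_mul]
  exact eq_boundary_of_quadratic (boundaryRoot_neg hμ)
    (boundaryRoot_isRoot hμ.ne' (by nlinarith))
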